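/- arXiv:2208.06705 — 2 statements merged into one kernel-verified Lean document; each statement's English description precedes it below -/
import Mathlib

section
/- For all n ≥ 0, the minimum length of a solution from peg 1 to peg 3 with n discs in which every move is between pegs 1 and 2 or between pegs 2 and 3 (i.e., no move is made directly between pegs 1 and 3 in either direction) equals 3^n − 1. -/
/-- Pegs are natural numbers; the valid pegs are 1, 2, 3. -/
abbrev Peg := ℕ

/-- A peg is valid if it is one of 1, 2, 3. -/
def validPeg (p : Peg) : Prop := p = 1 ∨ p = 2 ∨ p = 3

/-- A configuration of `n` discs assigns to each disc (indexed by size,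
smaller index = smaller disc) the peg it lies on. -/
abbrev Conf (n : ℕ) := Fin n → Peg

/-- `LegalMove c c' i j` : the configuration `c'` results from `c` by a single
legal move of the topmost (smallest) disc of peg `i` onto a different peg `j`,
where every disc currently on peg `j` is larger. -/
def LegalMove {n : ℕ} (c c' : Conf n) (i j : Peg) : Prop :=
  validPeg i ∧ validPeg j ∧ i ≠ j ∧
  ∃ d : Fin n, c d = i ∧ (∀ d', c d' = i → d ≤ d') ∧ (∀ d', c d' = j → d < d') ∧
    c' d = j ∧ (∀ d', d' ≠ d → c' d' = c d')

/-- `Solves c ms c'` : the list of moves `ms` (each move recorded as the ordered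
pair (source peg, destination peg)) legally transforms configuration `c` into `c'`. -/
inductive Solves {n : ℕ} : Conf n → List (Peg × Peg) → Conf n → Prop
  | nil (c : Conf n) : Solves c [] c
  | cons {c c' c'' : Conf n} {ms : List (Peg × Peg)} {i j : Peg} :
      LegalMove c c' i j → Solves c' ms c'' → Solves c ((i, j) :: ms) c''

/-- A solution from peg `i` to peg `j` with `n` discs: a list of legal moves
transforming the configuration with all discs on peg `i` into the configuration
with all discs on peg `j`. -/
def IsSolution (n : ℕ) (i j : Peg) (ms : List (Peg × Peg)) : Prop :=
  Solves (fun _ : Fin n => i) ms (fun _ : Fin n => j)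

/-- Total cost of a sequence of moves with respect to the weight function `w`. -/
noncomputable def cost (w : Peg → Peg → ℝ) (ms : List (Peg × Peg)) : ℝ :=
  (ms.map fun m => w m.1 m.2).sum

/-- `C w n i j` : the optimal (minimum) total cost over all solutions
from peg `i` to peg `j` with `n` discs. -/
noncomputable def C (w : Peg → Peg → ℝ) (n : ℕ) (i j : Peg) : ℝ :=
  sInf {x : ℝ | ∃ ms : List (Peg × Peg), IsSolution n i j ms ∧ cost w ms = x}


/- upper bound construction -/

def sol : ℕ → Peg → Peg → List (Peg × Peg)
  | 0, _, _ => []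
  | (n+1), i, j => sol n i j ++ [(i, 2)] ++ sol n j i ++ [(2, j)] ++ sol n i j

lemma sol_length (n : ℕ) (i j : Peg) : (sol n i j).length = 3 ^ n - 1 := by
  induction n generalizing i j with
  | zero => simp [sol]
  | succ n ih =>
    have h1 : 1 ≤ 3 ^ n := Nat.one_le_pow _ _ (by norm_num)
    simp [sol, ih, pow_succ]
    omega

lemma sol_moves (n : ℕ) {i j : Peg} (h : (i = 1 ∧ j = 3) ∨ (i = 3 ∧ j = 1)) :
    ∀ m ∈ sol n i j, m = (1, 2) ∨ m = (2, 1) ∨ m = (2, 3) ∨ m = (3, 2) := by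
  induction n generalizing i j with
  | zero => simp [sol]
  | succ n ih =>
    intro m hm
    simp [sol] at hm
    rcases h with ⟨hi, hj⟩ | ⟨hi, hj⟩ <;> subst hi <;> subst hj <;>
      rcases hm with h | h | h | h | h <;>
      first
        | (exact ih (by tauto) m h)
        | (subst h; tauto)

def liftC {n : ℕ} (c : Conf n) (p : Peg) : Conf (n+1) := Fin.lastCases p c

lemma liftC_const {n : ℕ} (p : Peg) : liftC (fun _ : Fin n => p) p = fun _ => p := by
  funext d
  refine Fin.lastCases ?_ ?_ d <;> simp [liftC]

lemma liftC_legal {n : ℕ} {c c' : Conf n} {i j : Peg} (p : Peg)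
    (h : LegalMove c c' i j) : LegalMove (liftC c p) (liftC c' p) i j := by
  obtain ⟨h1, h2, h3, d, hd1, hd2, hd3, hd4, hd5⟩ := h
  refine ⟨h1, h2, h3, d.castSucc, ?_, ?_, ?_, ?_, ?_⟩
  · simpa [liftC] using hd1
  · intro d'
    refine Fin.lastCases ?_ ?_ d'
    · intro _; exact (Fin.castSucc_lt_last d).le
    · intro e he; simp only [liftC, Fin.lastCases_castSucc] at he
      exact Fin.castSucc_le_castSucc_iff.mpr (hd2 e he)
  · intro d'
    refine Fin.lastCases ?_ ?_ d'
    · intro _; exact Fin.castSucc_lt_last d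
    · intro e he; simp only [liftC, Fin.lastCases_castSucc] at he
      exact Fin.castSucc_lt_castSucc_iff.mpr (hd3 e he)
  · simpa [liftC] using hd4
  · intro d'
    refine Fin.lastCases ?_ ?_ d'
    · intro _; simp [liftC]
    · intro e he
      have : e ≠ d := by
        intro hh; subst hh; exact he rfl
      simp only [liftC, Fin.lastCases_castSucc]
      exact hd5 e this

lemma liftC_solves {n : ℕ} {c c' : Conf n} {ms : List (Peg × Peg)} (p : Peg)
    (h : Solves c ms c') : Solves (liftC c p) ms (liftC c' p) := by
  induction h with
  | nil => exact Solves.nil _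
  | cons hm _ ih => exact Solves.cons (liftC_legal p hm) ih

lemma solves_append {n : ℕ} {c c' c'' : Conf n} {ms ms' : List (Peg × Peg)}
    (h : Solves c ms c') (h' : Solves c' ms' c'') : Solves c (ms ++ ms') c'' := by
  induction h with
  | nil => simpa using h'
  | cons hm _ ih => exact Solves.cons hm (ih h')

lemma big_move {n : ℕ} {c : Conf n} {i j : Peg} (hi : validPeg i) (hj : validPeg j)
    (hij : i ≠ j) (h : ∀ e, c e ≠ i ∧ c e ≠ j) :
    LegalMove (liftC c i) (liftC c j) i j := by
  refine ⟨hi, hj, hij, Fin.last n, by simp [liftC], ?_, ?_, by simp [liftC], ?_⟩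
  · intro d'
    refine Fin.lastCases ?_ ?_ d'
    · intro _; exact le_refl _
    · intro e he; simp only [liftC, Fin.lastCases_castSucc] at he
      exact absurd he (h e).1
  · intro d'
    refine Fin.lastCases ?_ ?_ d'
    · intro he; simp only [liftC, Fin.lastCases_last] at he; exact absurd he hij
    · intro e he; simp only [liftC, Fin.lastCases_castSucc] at he
      exact absurd he (h e).2
  · intro d'
    refine Fin.lastCases ?_ ?_ d'
    · intro hh; exact absurd rfl hh
    · intro e _; simp [liftC]


lemma sol_solves (n : ℕ) {i j : Peg} (h : (i = 1 ∧ j = 3) ∨ (i = 3 ∧ j = 1)) :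
    Solves (fun _ : Fin n => i) (sol n i j) (fun _ => j) := by
  induction n generalizing i j with
  | zero =>
    have : (fun _ : Fin 0 => i) = (fun _ => j) := by funext d; exact absurd d.2 (by omega)
    rw [sol, this]; exact Solves.nil _
  | succ n ih =>
    have hvi : validPeg i := by rcases h with ⟨h1,_⟩|⟨h1,_⟩ <;> subst h1 <;> simp [validPeg]
    have hvj : validPeg j := by rcases h with ⟨_,h1⟩|⟨_,h1⟩ <;> subst h1 <;> simp [validPeg]
    have hij : i ≠ j := by rcases h with ⟨h1,h2⟩|⟨h1,h2⟩ <;> subst h1 <;> subst h2 <;> decide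
    have h2i : i ≠ 2 := by rcases h with ⟨h1,_⟩|⟨h1,_⟩ <;> subst h1 <;> decide
    have h2j : j ≠ 2 := by rcases h with ⟨_,h1⟩|⟨_,h1⟩ <;> subst h1 <;> decide
    have hv2 : validPeg 2 := by simp [validPeg]
    have s1 : Solves (liftC (fun _ : Fin n => i) i) (sol n i j) (liftC (fun _ => j) i) :=
      liftC_solves i (ih h)
    have m1 : LegalMove (liftC (fun _ : Fin n => j) i) (liftC (fun _ : Fin n => j) 2) i 2 :=
      big_move hvi hv2 h2i (fun _ => ⟨fun hh => hij hh.symm, h2j⟩)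
    have s2 : Solves (liftC (fun _ : Fin n => j) 2) (sol n j i) (liftC (fun _ => i) 2) :=
      liftC_solves 2 (ih (by tauto))
    have m2 : LegalMove (liftC (fun _ : Fin n => i) 2) (liftC (fun _ : Fin n => i) j) 2 j :=
      big_move hv2 hvj (fun hh => h2j hh.symm) (fun _ => ⟨h2i, hij⟩)
    have s3 : Solves (liftC (fun _ : Fin n => i) j) (sol n i j) (liftC (fun _ => j) j) :=
      liftC_solves j (ih h)
    have := solves_append s1 (Solves.cons m1 (solves_append s2 (Solves.cons m2 s3)))
    rw [liftC_const, liftC_const] at this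
    simpa [sol] using this

lemma sol_isSolution (n : ℕ) : IsSolution n 1 3 (sol n 1 3) :=
  sol_solves n (Or.inl ⟨rfl, rfl⟩)


def pcount {n : ℕ} (c : Conf n) (d : Fin n) : ℕ :=
  (Finset.univ.filter (fun e => d < e ∧ c e = 2)).card

def digit {n : ℕ} (c : Conf n) (d : Fin n) : ℤ :=
  if Even (pcount c d) then (c d : ℤ) - 1 else 3 - (c d : ℤ)

def phi {n : ℕ} (c : Conf n) : ℤ := ∑ d : Fin n, digit c d * 3 ^ (d : ℕ)

lemma geo (m : ℕ) : ∑ i ∈ Finset.range m, 2 * (3:ℤ) ^ i = 3 ^ m - 1 := by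
  induction m with
  | zero => simp
  | succ m ih => rw [Finset.sum_range_succ, ih, pow_succ]; ring

lemma geo_fin {n : ℕ} (d : Fin n) :
    ∑ e ∈ Finset.univ.filter (fun e : Fin n => e < d), 2 * (3:ℤ) ^ (e : ℕ) = 3 ^ (d:ℕ) - 1 := by
  rw [← geo (d:ℕ)]
  have h1 : ∑ e ∈ Finset.univ.filter (fun e : Fin n => e < d), 2 * (3:ℤ) ^ (e : ℕ)
      = ∑ e : Fin n, (if (e:ℕ) < (d:ℕ) then 2 * (3:ℤ) ^ (e:ℕ) else 0) := by
    rw [Finset.sum_filter]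
    apply Finset.sum_congr rfl
    intro e _
    congr 1
  rw [h1, Fin.sum_univ_eq_sum_range (fun i => if i < (d:ℕ) then 2 * (3:ℤ) ^ i else 0)]
  rw [← Finset.sum_subset (Finset.range_subset_range.mpr d.2.le)
    (fun x _ hx => by rw [if_neg (by simpa using hx)])]
  exact Finset.sum_congr rfl (fun x hx => if_pos (Finset.mem_range.mp hx))

lemma phi_const_one {n : ℕ} : phi (fun _ : Fin n => 1) = 0 := by
  unfold phi digit pcount
  simp

lemma phi_const_three {n : ℕ} : phi (fun _ : Fin n => 3) = 3 ^ n - 1 := by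
  unfold phi digit pcount
  simp only [Finset.filter_false, Finset.card_empty]
  norm_num
  exact (Fin.sum_univ_eq_sum_range (fun i => 2 * (3:ℤ) ^ i) n).trans (geo n)


lemma pcount_small {n : ℕ} (f : Conf n) (d e : Fin n) (k : Peg) (hk2 : k ≠ 2)
    (hk : ∀ e', e' < d → f e' = k) (hed : e < d) :
    pcount f e = pcount f d + (if f d = 2 then 1 else 0) := by
  unfold pcount
  by_cases hfd : f d = 2
  · rw [if_pos hfd]
    have hset : Finset.univ.filter (fun e' => e < e' ∧ f e' = 2)
        = insert d (Finset.univ.filter (fun e' : Fin n => d < e' ∧ f e' = 2)) := by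
      ext x
      simp only [Finset.mem_filter, Finset.mem_insert, Finset.mem_univ, true_and]
      constructor
      · rintro ⟨hx1, hx2⟩
        rcases lt_trichotomy x d with h | h | h
        · exact absurd hx2 (by rw [hk x h]; exact hk2)
        · exact Or.inl h
        · exact Or.inr ⟨h, hx2⟩
      · rintro (h | ⟨h1, h2⟩)
        · subst h; exact ⟨hed, hfd⟩
        · exact ⟨lt_trans hed h1, h2⟩
    rw [hset, Finset.card_insert_of_notMem (by simp)]
  · rw [if_neg hfd]
    have hset : Finset.univ.filter (fun e' => e < e' ∧ f e' = 2)
        = Finset.univ.filter (fun e' : Fin n => d < e' ∧ f e' = 2) := by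
      ext x
      simp only [Finset.mem_filter, Finset.mem_univ, true_and]
      constructor
      · rintro ⟨hx1, hx2⟩
        rcases lt_trichotomy x d with h | h | h
        · exact absurd hx2 (by rw [hk x h]; exact hk2)
        · subst h; exact absurd hx2 hfd
        · exact ⟨h, hx2⟩
      · rintro ⟨h1, h2⟩
        exact ⟨lt_trans hed h1, h2⟩
    rw [hset, add_zero]

lemma phi_diff {n : ℕ} (c c' : Conf n) (d : Fin n) (s1 s2 : ℤ)
    (hgt : ∀ e, d < e → digit c' e = digit c e)
    (hd : digit c' d - digit c d = s1)
    (hlt : ∀ e, e < d → digit c' e - digit c e = s2) :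
    2 * (phi c' - phi c) = 2 * s1 * 3 ^ (d:ℕ) + s2 * (3 ^ (d:ℕ) - 1) := by
  unfold phi
  rw [← Finset.sum_sub_distrib]
  have h1 : ∀ e : Fin n, digit c' e * 3 ^ (e:ℕ) - digit c e * 3 ^ (e:ℕ)
      = (if e < d then s2 * 3 ^ (e:ℕ) else if e = d then s1 * 3 ^ (d:ℕ) else 0) := by
    intro e
    rcases lt_trichotomy e d with h | h | h
    · rw [if_pos h, ← hlt e h]; ring
    · subst h; rw [if_neg (lt_irrefl _), if_pos rfl, ← hd]; ring
    · rw [if_neg (by exact asymm h), if_neg (ne_of_gt h), hgt e h]; ring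
  rw [Finset.sum_congr rfl (fun e _ => h1 e), Finset.sum_ite]
  rw [Finset.sum_ite_eq' (Finset.univ.filter fun e : Fin n => ¬ e < d) d
    (fun _ => s1 * 3 ^ (d:ℕ))]
  rw [if_pos (by simp)]
  have h2 : ∑ e ∈ Finset.univ.filter (fun e : Fin n => e < d), s2 * 3 ^ (e:ℕ)
      = s2 * ∑ e ∈ Finset.univ.filter (fun e : Fin n => e < d), 3 ^ (e:ℕ) := by
    rw [Finset.mul_sum]
  have h3 := geo_fin d
  have h4 : 2 * ∑ x ∈ Finset.univ.filter (fun x : Fin n => x < d), s2 * 3 ^ (x:ℕ)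
      = s2 * (3 ^ (d:ℕ) - 1) := by
    rw [← h3, Finset.mul_sum, Finset.mul_sum]
    apply Finset.sum_congr rfl
    intro x _; ring
  linarith

lemma phi_move {n : ℕ} {c c' : Conf n} {i j : Peg}
    (hv : ∀ e, validPeg (c e)) (hm : LegalMove c c' i j)
    (hij : (i, j) = (1, 2) ∨ (i, j) = (2, 1) ∨ (i, j) = (2, 3) ∨ (i, j) = (3, 2)) :
    phi c' - phi c = 1 ∨ phi c' - phi c = -1 := by
  obtain ⟨-, -, hne, d, hcd, hmin, hlt, hc'd, hoth⟩ := hm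
  have hgt : ∀ e, d < e → digit c' e = digit c e := by
    intro e he
    have hce : c' e = c e := hoth e (ne_of_gt he)
    have hpc : pcount c' e = pcount c e := by
      unfold pcount; congr 1
      apply Finset.filter_congr
      intro x _
      rcases eq_or_ne x d with h | h
      · have h2 : ¬ e < x := by rw [h]; exact not_lt.mpr he.le
        simp [h2]
      · rw [hoth x h]
    unfold digit; rw [hce, hpc]
  have hpd : pcount c' d = pcount c d := by
    unfold pcount; congr 1
    apply Finset.filter_congr
    intro x _
    rcases eq_or_ne x d with h | h
    · simp [h, lt_irrefl]
    · rw [hoth x h]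
  rcases hij with h | h | h | h <;>
    simp only [Prod.mk.injEq] at h
  · obtain ⟨hi, hj⟩ := h
    subst hi; subst hj
    have hk : ∀ e, e < d → c e = 3 := by
      intro e he
      rcases hv e with hq | hq | hq
      · exact absurd (hmin e hq) (not_le.mpr he)
      · exact absurd (hlt e hq) (not_lt.mpr he.le)
      · exact hq
    have hk' : ∀ e, e < d → c' e = 3 := fun e he => by
      rw [hoth e (ne_of_lt he), hk e he]
    have hpe := fun (e : Fin n) (he : e < d) => pcount_small c d e 3 (by decide) hk he
    have hpe' := fun (e : Fin n) (he : e < d) => pcount_small c' d e 3 (by decide) hk' he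
    simp only [hcd] at hpe
    simp only [hc'd, hpd] at hpe'
    norm_num at hpe hpe'
    by_cases hq : Even (pcount c d)
    · have key := phi_diff c c' d (1) (-2) hgt ?_ ?_
      · generalize (3:ℤ) ^ (d:ℕ) = t at key
        omega
      · simp [digit, hcd, hc'd, hpd, hq]
      · intro e he
        have h1 := hpe e he
        have h2 := hpe' e he
        simp [digit, hk e he, hk' e he, h1, h2, Nat.even_add_one, hq]
    · have key := phi_diff c c' d (-1) (2) hgt ?_ ?_
      · generalize (3:ℤ) ^ (d:ℕ) = t at key
        omega
      · simp [digit, hcd, hc'd, hpd, hq]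
      · intro e he
        have h1 := hpe e he
        have h2 := hpe' e he
        simp [digit, hk e he, hk' e he, h1, h2, Nat.even_add_one, hq]
  · obtain ⟨hi, hj⟩ := h
    subst hi; subst hj
    have hk : ∀ e, e < d → c e = 3 := by
      intro e he
      rcases hv e with hq | hq | hq
      · exact absurd (hlt e hq) (not_lt.mpr he.le)
      · exact absurd (hmin e hq) (not_le.mpr he)
      · exact hq
    have hk' : ∀ e, e < d → c' e = 3 := fun e he => by
      rw [hoth e (ne_of_lt he), hk e he]
    have hpe := fun (e : Fin n) (he : e < d) => pcount_small c d e 3 (by decide) hk he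
    have hpe' := fun (e : Fin n) (he : e < d) => pcount_small c' d e 3 (by decide) hk' he
    simp only [hcd] at hpe
    simp only [hc'd, hpd] at hpe'
    norm_num at hpe hpe'
    by_cases hq : Even (pcount c d)
    · have key := phi_diff c c' d (-1) (2) hgt ?_ ?_
      · generalize (3:ℤ) ^ (d:ℕ) = t at key
        omega
      · simp [digit, hcd, hc'd, hpd, hq]
      · intro e he
        have h1 := hpe e he
        have h2 := hpe' e he
        simp [digit, hk e he, hk' e he, h1, h2, Nat.even_add_one, hq]
    · have key := phi_diff c c' d (1) (-2) hgt ?_ ?_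
      · generalize (3:ℤ) ^ (d:ℕ) = t at key
        omega
      · simp [digit, hcd, hc'd, hpd, hq]
      · intro e he
        have h1 := hpe e he
        have h2 := hpe' e he
        simp [digit, hk e he, hk' e he, h1, h2, Nat.even_add_one, hq]
  · obtain ⟨hi, hj⟩ := h
    subst hi; subst hj
    have hk : ∀ e, e < d → c e = 1 := by
      intro e he
      rcases hv e with hq | hq | hq
      · exact hq
      · exact absurd (hmin e hq) (not_le.mpr he)
      · exact absurd (hlt e hq) (not_lt.mpr he.le)
    have hk' : ∀ e, e < d → c' e = 1 := fun e he => by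
      rw [hoth e (ne_of_lt he), hk e he]
    have hpe := fun (e : Fin n) (he : e < d) => pcount_small c d e 1 (by decide) hk he
    have hpe' := fun (e : Fin n) (he : e < d) => pcount_small c' d e 1 (by decide) hk' he
    simp only [hcd] at hpe
    simp only [hc'd, hpd] at hpe'
    norm_num at hpe hpe'
    by_cases hq : Even (pcount c d)
    · have key := phi_diff c c' d (1) (-2) hgt ?_ ?_
      · generalize (3:ℤ) ^ (d:ℕ) = t at key
        omega
      · simp [digit, hcd, hc'd, hpd, hq]
      · intro e he
        have h1 := hpe e he
        have h2 := hpe' e he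
        simp [digit, hk e he, hk' e he, h1, h2, Nat.even_add_one, hq]
    · have key := phi_diff c c' d (-1) (2) hgt ?_ ?_
      · generalize (3:ℤ) ^ (d:ℕ) = t at key
        omega
      · simp [digit, hcd, hc'd, hpd, hq]
      · intro e he
        have h1 := hpe e he
        have h2 := hpe' e he
        simp [digit, hk e he, hk' e he, h1, h2, Nat.even_add_one, hq]
  · obtain ⟨hi, hj⟩ := h
    subst hi; subst hj
    have hk : ∀ e, e < d → c e = 1 := by
      intro e he
      rcases hv e with hq | hq | hq
      · exact hq
      · exact absurd (hlt e hq) (not_lt.mpr he.le)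
      · exact absurd (hmin e hq) (not_le.mpr he)
    have hk' : ∀ e, e < d → c' e = 1 := fun e he => by
      rw [hoth e (ne_of_lt he), hk e he]
    have hpe := fun (e : Fin n) (he : e < d) => pcount_small c d e 1 (by decide) hk he
    have hpe' := fun (e : Fin n) (he : e < d) => pcount_small c' d e 1 (by decide) hk' he
    simp only [hcd] at hpe
    simp only [hc'd, hpd] at hpe'
    norm_num at hpe hpe'
    by_cases hq : Even (pcount c d)
    · have key := phi_diff c c' d (-1) (2) hgt ?_ ?_
      · generalize (3:ℤ) ^ (d:ℕ) = t at key
        omega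
      · simp [digit, hcd, hc'd, hpd, hq]
      · intro e he
        have h1 := hpe e he
        have h2 := hpe' e he
        simp [digit, hk e he, hk' e he, h1, h2, Nat.even_add_one, hq]
    · have key := phi_diff c c' d (1) (-2) hgt ?_ ?_
      · generalize (3:ℤ) ^ (d:ℕ) = t at key
        omega
      · simp [digit, hcd, hc'd, hpd, hq]
      · intro e he
        have h1 := hpe e he
        have h2 := hpe' e he
        simp [digit, hk e he, hk' e he, h1, h2, Nat.even_add_one, hq]

lemma legal_valid {n : ℕ} {c c' : Conf n} {i j : Peg} (hv : ∀ e, validPeg (c e))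
    (hm : LegalMove c c' i j) : ∀ e, validPeg (c' e) := by
  obtain ⟨_, hj, _, d, _, _, _, hc'd, hoth⟩ := hm
  intro e
  rcases eq_or_ne e d with h | h
  · rw [h, hc'd]; exact hj
  · rw [hoth e h]; exact hv e

lemma solves_bound {n : ℕ} {c c' : Conf n} {ms : List (Peg × Peg)} (hs : Solves c ms c') :
    (∀ e, validPeg (c e)) →
    (∀ m ∈ ms, m = (1, 2) ∨ m = (2, 1) ∨ m = (2, 3) ∨ m = (3, 2)) →
    |phi c' - phi c| ≤ ms.length := by
  induction hs with
  | nil => intro _ _; simp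
  | @cons c c' c'' ms i j hm hs ih =>
    intro hv hall
    have h1 := phi_move hv hm (by simpa using hall (i, j) List.mem_cons_self)
    have h2 := ih (legal_valid hv hm) (fun m hm' => hall m (List.mem_cons_of_mem _ hm'))
    have h3 : |phi c' - phi c| ≤ 1 := by rcases h1 with h | h <;> simp [h]
    have h4 := abs_sub_le (phi c'') (phi c') (phi c)
    rw [List.length_cons]
    push_cast
    linarith


/-- in the linear variant (no direct moves between pegs 1 and 3),
the minimum length of a solution from peg 1 to peg 3 with `n` discs is `3 ^ n - 1`. -/
theorem stmt4 (n : ℕ) :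
    IsLeast {L : ℕ | ∃ ms : List (Peg × Peg), IsSolution n 1 3 ms ∧
      (∀ m ∈ ms, m = (1, 2) ∨ m = (2, 1) ∨ m = (2, 3) ∨ m = (3, 2)) ∧
      ms.length = L} (3 ^ n - 1) := by
  constructor
  · exact ⟨sol n 1 3, sol_isSolution n, sol_moves n (Or.inl ⟨rfl, rfl⟩), sol_length n 1 3⟩
  · rintro L ⟨ms, hsol, hmoves, rfl⟩
    have hb := solves_bound hsol (fun e => Or.inl rfl) hmoves
    rw [phi_const_three, phi_const_one, sub_zero] at hb
    have h1 : (1:ℕ) ≤ 3 ^ n := Nat.one_le_pow _ _ (by norm_num)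
    have h2 : ((3:ℤ) ^ n - 1) ≤ ms.length := by
      refine le_trans ?_ hb
      exact le_abs_self _
    zify [h1]
    exact h2
end

section
/- For all n ≥ 0 and distinct pegs i, j ∈ {1,2,3}, there exists a minimum-cost solution from peg i to peg j with n discs whose length u satisfies 2^n − 1 ≤ u ≤ 3^n − 1. -/
/- ## Auxiliary lemmas -/

lemma cost_nonneg (w : Peg → Peg → ℝ) (hw : ∀ i j, 0 ≤ w i j) (ms : List (Peg × Peg)) :
    0 ≤ cost w ms := by
  apply List.sum_nonneg
  intro x hx
  simp only [List.mem_map] at hx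
  obtain ⟨m, _, rfl⟩ := hx
  exact hw _ _

lemma cost_append (w : Peg → Peg → ℝ) (l₁ l₂ : List (Peg × Peg)) :
    cost w (l₁ ++ l₂) = cost w l₁ + cost w l₂ := by
  simp [cost]

lemma solves_append_s5 {n : ℕ} {c cm c' : Conf n} {l₁ l₂ : List (Peg × Peg)}
    (h₁ : Solves c l₁ cm) (h₂ : Solves cm l₂ c') : Solves c (l₁ ++ l₂) c' := by
  induction h₁ with
  | nil => exact h₂
  | cons hm _ ih => exact .cons hm (ih h₂)

lemma solves_split {n : ℕ} {c c' : Conf n} {l₁ l₂ : List (Peg × Peg)}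
    (h : Solves c (l₁ ++ l₂) c') : ∃ cm, Solves c l₁ cm ∧ Solves cm l₂ c' := by
  induction l₁ generalizing c with
  | nil => exact ⟨c, .nil c, h⟩
  | cons m t ih =>
    cases h with
    | cons hm hs =>
      obtain ⟨cm, h1, h2⟩ := ih hs
      exact ⟨cm, .cons hm h1, h2⟩

lemma move_valid {n : ℕ} {c c' : Conf n} {i j : Peg} (h : LegalMove c c' i j)
    (hv : ∀ d, validPeg (c d)) : ∀ d, validPeg (c' d) := by
  obtain ⟨_, hvj, _, d, _, _, _, hd', hrest⟩ := h
  intro e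
  by_cases he : e = d
  · rw [he, hd']; exact hvj
  · rw [hrest e he]; exact hv e

lemma solves_valid {n : ℕ} {c c' : Conf n} {ms : List (Peg × Peg)} (h : Solves c ms c')
    (hv : ∀ d, validPeg (c d)) : ∀ d, validPeg (c' d) := by
  induction h with
  | nil => exact hv
  | cons hm _ ih => exact ih (move_valid hm hv)

lemma solves_moves_valid {n : ℕ} {c c' : Conf n} {ms : List (Peg × Peg)} (h : Solves c ms c') :
    ∀ m ∈ ms, validPeg m.1 ∧ validPeg m.2 := by
  induction h with
  | nil => intro m hm; simp at hm
  | cons hm _ ih =>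
    intro m hmem
    rcases List.mem_cons.mp hmem with rfl | hmem
    · exact ⟨hm.1, hm.2.1⟩
    · exact ih m hmem

/- ## Lifting (adding a largest disc that does not move) -/

lemma lift_legal {n : ℕ} {c c' : Conf n} {p q : Peg} (h : LegalMove c c' p q) (x : Peg) :
    LegalMove (Fin.snoc c x) (Fin.snoc c' x) p q := by
  obtain ⟨hvp, hvq, hpq, d, hd, hmin, hlt, hd', hrest⟩ := h
  refine ⟨hvp, hvq, hpq, d.castSucc, by simp [hd], ?_, ?_, by simp [hd'], ?_⟩
  · intro d' hd'
    rcases Fin.eq_castSucc_or_eq_last d' with ⟨e, rfl⟩ | rfl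
    · simp only [Fin.snoc_castSucc] at hd'
      exact Fin.castSucc_le_castSucc_iff.mpr (hmin e hd')
    · exact le_of_lt (Fin.castSucc_lt_last d)
  · intro d' hd'
    rcases Fin.eq_castSucc_or_eq_last d' with ⟨e, rfl⟩ | rfl
    · simp only [Fin.snoc_castSucc] at hd'
      exact Fin.castSucc_lt_castSucc_iff.mpr (hlt e hd')
    · exact Fin.castSucc_lt_last d
  · intro d' hne
    rcases Fin.eq_castSucc_or_eq_last d' with ⟨e, rfl⟩ | rfl
    · simp only [Fin.snoc_castSucc]
      exact hrest e (fun hh => hne (by rw [hh]))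
    · simp

lemma lift_solves {n : ℕ} {c c' : Conf n} {ms : List (Peg × Peg)} (h : Solves c ms c')
    (x : Peg) : Solves (Fin.snoc c x) ms (Fin.snoc c' x) := by
  induction h with
  | nil => exact .nil _
  | cons hm _ ih => exact .cons (lift_legal hm x) ih

lemma const_snoc (n : ℕ) (x : Peg) :
    (fun _ : Fin (n + 1) => x) = Fin.snoc (fun _ : Fin n => x) x := by
  funext d
  rcases Fin.eq_castSucc_or_eq_last d with ⟨e, rfl⟩ | rfl <;> simp

/- ## The classical Hanoi solution (existence of solutions) -/

def hanoi : ℕ → Peg → Peg → Peg → List (Peg × Peg)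
  | 0, _, _, _ => []
  | n + 1, i, j, k => hanoi n i k j ++ (i, j) :: hanoi n k j i

lemma hanoi_solves : ∀ (n : ℕ) (i j k : Peg), validPeg i → validPeg j → validPeg k →
    i ≠ j → i ≠ k → j ≠ k →
    Solves (fun _ : Fin n => i) (hanoi n i j k) (fun _ : Fin n => j) := by
  intro n
  induction n with
  | zero =>
    intro i j k _ _ _ _ _ _
    have h : (fun _ : Fin 0 => i) = (fun _ : Fin 0 => j) := funext (fun d => d.elim0)
    rw [h, hanoi]
    exact .nil _
  | succ n ih =>
    intro i j k hi hj hk hij hik hjk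
    rw [hanoi, const_snoc n i, const_snoc n j]
    have h1 : Solves (Fin.snoc (fun _ : Fin n => i) i) (hanoi n i k j)
        (Fin.snoc (fun _ : Fin n => k) i) :=
      lift_solves (ih i k j hi hk hj hik hij (fun h => hjk h.symm)) i
    have hmove : LegalMove (Fin.snoc (fun _ : Fin n => k) i)
        (Fin.snoc (fun _ : Fin n => k) j) i j := by
      refine ⟨hi, hj, hij, Fin.last n, by simp, ?_, ?_, by simp, ?_⟩
      · intro d' hd'
        rcases Fin.eq_castSucc_or_eq_last d' with ⟨e, rfl⟩ | rfl
        · simp only [Fin.snoc_castSucc] at hd'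
          exact absurd hd'.symm hik
        · exact le_refl _
      · intro d' hd'
        rcases Fin.eq_castSucc_or_eq_last d' with ⟨e, rfl⟩ | rfl
        · simp only [Fin.snoc_castSucc] at hd'
          exact absurd hd'.symm hjk
        · simp only [Fin.snoc_last] at hd'
          exact absurd hd' hij
      · intro d' hne
        rcases Fin.eq_castSucc_or_eq_last d' with ⟨e, rfl⟩ | rfl
        · simp
        · exact absurd rfl hne
    have h2 : Solves (Fin.snoc (fun _ : Fin n => k) j) (hanoi n k j i)
        (Fin.snoc (fun _ : Fin n => j) j) :=
      lift_solves (ih k j i hk hj hi (fun h => hjk h.symm) (fun h => hik h.symm) hij.symm) j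
    exact solves_append_s5 h1 (.cons hmove h2)

/- ## Restriction (removing the largest disc) -/

lemma restrict {n : ℕ} {c c' : Conf (n + 1)} {ms : List (Peg × Peg)} (h : Solves c ms c') :
    ∃ r : List (Peg × Peg), Solves (fun e : Fin n => c e.castSucc) r
      (fun e : Fin n => c' e.castSucc) ∧ r.length ≤ ms.length := by
  induction h with
  | nil => exact ⟨[], .nil _, le_refl _⟩
  | @cons c c₁ c'' ms p q hm hs ih =>
    obtain ⟨hvp, hvq, hpq, d, hd, hmin, hlt, hd', hrest⟩ := hm
    obtain ⟨r, hr, hlen⟩ := ih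
    rcases Fin.eq_castSucc_or_eq_last d with ⟨e, rfl⟩ | rfl
    · refine ⟨(p, q) :: r, .cons ?_ hr, by simpa using Nat.succ_le_succ hlen⟩
      refine ⟨hvp, hvq, hpq, e, hd, ?_, ?_, hd', ?_⟩
      · intro e' he'
        exact Fin.castSucc_le_castSucc_iff.mp (hmin e'.castSucc he')
      · intro e' he'
        exact Fin.castSucc_lt_castSucc_iff.mp (hlt e'.castSucc he')
      · intro e' hne
        exact hrest e'.castSucc (fun hh => hne (Fin.castSucc_injective n hh))
    · have heq : (fun e : Fin n => c₁ e.castSucc) = fun e : Fin n => c e.castSucc :=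
        funext fun e => hrest e.castSucc (Fin.castSucc_lt_last e).ne
    --
      rw [heq] at hr
      exact ⟨r, hr, Nat.le_succ_of_le hlen⟩

/- ## The third peg -/

lemma third (p q : Peg) (hp : validPeg p) (hq : validPeg q) (hpq : p ≠ q) :
    ∃ k, validPeg k ∧ k ≠ p ∧ k ≠ q ∧ ∀ r, validPeg r → r ≠ p → r ≠ q → r = k := by
  have h1 : validPeg 1 := Or.inl rfl
  have h2 : validPeg 2 := Or.inr (Or.inl rfl)
  have h3 : validPeg 3 := Or.inr (Or.inr rfl)
  rcases hp with rfl | rfl | rfl <;> rcases hq with rfl | rfl | rfl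
  · exact absurd rfl hpq
  · exact ⟨3, h3, by decide, by decide, fun r hr ha hb => by
      rcases hr with rfl | rfl | rfl; exacts [absurd rfl ha, absurd rfl hb, rfl]⟩
  · exact ⟨2, h2, by decide, by decide, fun r hr ha hb => by
      rcases hr with rfl | rfl | rfl; exacts [absurd rfl ha, rfl, absurd rfl hb]⟩
  · exact ⟨3, h3, by decide, by decide, fun r hr ha hb => by
      rcases hr with rfl | rfl | rfl; exacts [absurd rfl hb, absurd rfl ha, rfl]⟩
  · exact absurd rfl hpq
  · exact ⟨1, h1, by decide, by decide, fun r hr ha hb => by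
      rcases hr with rfl | rfl | rfl; exacts [rfl, absurd rfl ha, absurd rfl hb]⟩
  · exact ⟨2, h2, by decide, by decide, fun r hr ha hb => by
      rcases hr with rfl | rfl | rfl; exacts [absurd rfl hb, rfl, absurd rfl ha]⟩
  · exact ⟨1, h1, by decide, by decide, fun r hr ha hb => by
      rcases hr with rfl | rfl | rfl; exacts [rfl, absurd rfl hb, absurd rfl ha]⟩
  · exact absurd rfl hpq

/- ## First and last move of a given disc -/

lemma first_move {n : ℕ} {c c' : Conf n} {ms : List (Peg × Peg)} (D : Fin n)
    (h : Solves c ms c') (hne : c D ≠ c' D) :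
    ∃ (ms₁ : List (Peg × Peg)) (q : Peg) (ms₂ : List (Peg × Peg)) (cm cm' : Conf n),
      ms = ms₁ ++ (c D, q) :: ms₂ ∧ Solves c ms₁ cm ∧ cm D = c D ∧
      LegalMove cm cm' (c D) q ∧ cm' D = q ∧ Solves cm' ms₂ c' := by
  induction h with
  | nil => exact absurd rfl hne
  | @cons c c₁ c'' ms p q hm hs ih =>
    by_cases hD : c₁ D = c D
    · obtain ⟨ms₁, q', ms₂, cm, cm', hmseq, hs₁, hcmD, hlm, hm'D, hs₂⟩ := ih (by rw [hD]; exact hne)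
      refine ⟨(p, q) :: ms₁, q', ms₂, cm, cm', ?_, .cons hm hs₁, ?_, ?_, hm'D, hs₂⟩
      · rw [hmseq, hD]; rfl
      · rw [hcmD, hD]
      · rw [← hD]; exact hlm
    · have hm0 := hm
      obtain ⟨hvp, hvq, hpq, d, hd, hmin, hlt, hd', hrest⟩ := hm
      have hdD : d = D := by
        by_contra h'
        exact hD (hrest D (fun hh => h' hh.symm))
      subst hdD
      refine ⟨[], q, ms, c, c₁, by simp [hd], .nil c, rfl, by rw [hd]; exact hm0, hd', hs⟩

lemma last_move {n : ℕ} {c c' : Conf n} {ms : List (Peg × Peg)} (D : Fin n)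
    (h : Solves c ms c') (hne : c D ≠ c' D) :
    ∃ (ms₁ : List (Peg × Peg)) (p : Peg) (ms₂ : List (Peg × Peg)) (cm cm' : Conf n),
      ms = ms₁ ++ (p, c' D) :: ms₂ ∧ Solves c ms₁ cm ∧
      LegalMove cm cm' p (c' D) ∧ cm D ≠ cm' D ∧ cm' D = c' D ∧ Solves cm' ms₂ c' := by
  induction h with
  | nil => exact absurd rfl hne
  | @cons c c₁ c'' ms p q hm hs ih =>
    by_cases hD : c₁ D = c'' D
    · have hmove : c D ≠ c₁ D := by rw [hD]; exact hne
      have hm0 := hm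
      obtain ⟨hvp, hvq, hpq, d, hd, hmin, hlt, hd', hrest⟩ := hm
      have hdD : d = D := by
        by_contra h'
        exact hmove (hrest D (fun hh => h' hh.symm)).symm
      have hq : q = c'' D := by rw [← hD, ← hdD]; exact hd'.symm
      subst hq
      exact ⟨[], p, ms, c, c₁, rfl, .nil c, hm0, hmove, hD, hs⟩
    · obtain ⟨ms₁, p', ms₂, cm, cm', hmseq, hs₁, hlm, hmv, hm'D, hs₂⟩ := ih hD
      exact ⟨(p, q) :: ms₁, p', ms₂, cm, cm', by rw [hmseq]; rfl, .cons hm hs₁, hlm, hmv, hm'D, hs₂⟩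

/- ## Lower bound: every solution has length at least `2 ^ n - 1` -/

lemma lower_bound : ∀ (n : ℕ) (i j : Peg), validPeg i → validPeg j → i ≠ j →
    ∀ ms : List (Peg × Peg), Solves (fun _ : Fin n => i) ms (fun _ : Fin n => j) →
    2 ^ n - 1 ≤ ms.length := by
  intro n
  induction n with
  | zero => intro i j _ _ _ ms _; simp
  | succ n ih =>
    intro i j hi hj hij ms h
    have h2n : 1 ≤ 2 ^ n := Nat.one_le_two_pow
    have hpow : 2 ^ (n + 1) = 2 * 2 ^ n := by ring
    obtain ⟨ms₁, q, ms₂, cm, cm', hmseq, hs₁, hcmD, hlm, hm'D, hs₂⟩ :=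
      first_move (Fin.last n) h hij
    have hlm0 := hlm
    obtain ⟨hvi', hvq, hiq, d, hd, hmin, hlt, hd', hrest⟩ := hlm
    have hdD : d = Fin.last n := by
      by_contra h'
      exact hiq (by rw [← hm'D, hrest (Fin.last n) (fun hh => h' hh.symm), hcmD])
    subst hdD
    have hvalid : ∀ e, validPeg (cm e) := solves_valid hs₁ (fun _ => hi)
    have hvalid' : ∀ e, validPeg (cm' e) := move_valid hlm0 hvalid
    obtain ⟨k, hvk, hki, hkq, huniq⟩ := third i q hi hvq hiq
    have hsmall : ∀ e : Fin n, cm e.castSucc = k := by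
      intro e
      refine huniq _ (hvalid _) ?_ ?_
      · intro hh
        exact absurd (hmin _ hh) (not_le.mpr (Fin.castSucc_lt_last e))
      · intro hh
        exact absurd (hlt _ hh) (not_lt.mpr (le_of_lt (Fin.castSucc_lt_last e)))
    have hsmall' : ∀ e : Fin n, cm' e.castSucc = k := fun e => by
      rw [hrest _ (Fin.castSucc_lt_last e).ne]; exact hsmall e
    obtain ⟨r₁, hr₁, hlen₁⟩ := restrict hs₁
    obtain ⟨r₂, hr₂, hlen₂⟩ := restrict hs₂
    rw [show (fun e : Fin n => cm e.castSucc) = (fun _ : Fin n => k) from funext hsmall] at hr₁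
    have h1 : 2 ^ n - 1 ≤ r₁.length := ih i k hi hvk (fun hh => hki hh.symm) r₁ hr₁
    by_cases hkj : k = j
    · -- the small discs are parked on `j`; locate a later move of the big disc onto `j`
      have hne₂ : cm' (Fin.last n) ≠ (fun _ : Fin (n+1) => j) (Fin.last n) := by
        rw [hm'D]
        exact fun hh => hkq (by rw [hkj, hh])
      obtain ⟨ms₃, p', ms₄, cm₃, cm₃', hms₂eq, hs₃, hlm₂, hmoved, hm₃'D, hs₄⟩ :=
        last_move (Fin.last n) hs₂ hne₂
      have hlm₂0 := hlm₂
      obtain ⟨hvp', hvj', hp'j, d₂, hd₂, hmin₂, hlt₂, hd₂', hrest₂⟩ := hlm₂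
      have hd₂D : d₂ = Fin.last n := by
        by_contra h'
        exact hmoved (hrest₂ (Fin.last n) (fun hh => h' hh.symm)).symm
      subst hd₂D
      have hvalid₃ : ∀ e, validPeg (cm₃ e) := solves_valid hs₃ hvalid'
      obtain ⟨k', hvk', hk'p, hk'j, huniq'⟩ := third p' j hvp' hj hp'j
      have hsmall₃ : ∀ e : Fin n, cm₃ e.castSucc = k' := by
        intro e
        refine huniq' _ (hvalid₃ _) ?_ ?_
        · intro hh
          exact absurd (hmin₂ _ hh) (not_le.mpr (Fin.castSucc_lt_last e))
        · intro hh
          exact absurd (hlt₂ _ hh) (not_lt.mpr (le_of_lt (Fin.castSucc_lt_last e)))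
      have hsmall₃' : ∀ e : Fin n, cm₃' e.castSucc = k' := fun e => by
        rw [hrest₂ _ (Fin.castSucc_lt_last e).ne]; exact hsmall₃ e
      obtain ⟨r₃, hr₃, hlen₃⟩ := restrict hs₃
      obtain ⟨r₄, hr₄, hlen₄⟩ := restrict hs₄
      rw [show (fun e : Fin n => cm' e.castSucc) = (fun _ : Fin n => k) from funext hsmall',
        show (fun e : Fin n => cm₃ e.castSucc) = (fun _ : Fin n => k') from funext hsmall₃] at hr₃
      rw [show (fun e : Fin n => cm₃' e.castSucc) = (fun _ : Fin n => k') from funext hsmall₃'] at hr₄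
      have h3 : 2 ^ n - 1 ≤ r₃.length :=
        ih k k' hvk hvk' (fun hh => hk'j (by rw [← hh, hkj])) r₃ hr₃
      have h4 : 2 ^ n - 1 ≤ r₄.length := ih k' j hvk' hj hk'j r₄ hr₄
      have hlength : ms.length = ms₁.length + 1 + (ms₃.length + 1 + ms₄.length) := by
        rw [hmseq, hms₂eq]; simp; omega
      omega
    · rw [show (fun e : Fin n => cm' e.castSucc) = (fun _ : Fin n => k) from funext hsmall'] at hr₂
      have h2 : 2 ^ n - 1 ≤ r₂.length := ih k j hvk hj hkj r₂ hr₂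
      have hlength : ms.length = ms₁.length + 1 + ms₂.length := by
        rw [hmseq]; simp; omega
      omega

/- ## Finiteness of bounded-length lists over a finite set -/

lemma finite_lists {α : Type*} (s : Set α) (hs : s.Finite) :
    ∀ K : ℕ, {l : List α | l.length ≤ K ∧ ∀ x ∈ l, x ∈ s}.Finite := by
  intro K
  induction K with
  | zero =>
    apply Set.Finite.subset (Set.finite_singleton ([] : List α))
    rintro l ⟨h1, -⟩
    simp only [Set.mem_singleton_iff]
    exact List.length_eq_zero_iff.mp (Nat.le_zero.mp h1)
  | succ K ihK =>
    apply Set.Finite.subset ((hs.image2 List.cons ihK).insert [])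
    rintro l ⟨h1, h2⟩
    cases l with
    | nil => exact Set.mem_insert _ _
    | cons x t =>
      refine Set.mem_insert_of_mem _ ?_
      refine Set.mem_image2.mpr ⟨x, h2 x List.mem_cons_self, t,
        ⟨?_, fun y hy => h2 y (List.mem_cons_of_mem x hy)⟩, rfl⟩
      simpa using h1

/- ## Encoding valid pegs into `Fin 3` -/

def encPeg : Peg → Fin 3 := fun p => if p = 1 then 0 else if p = 2 then 1 else 2

lemma encPeg_inj {p q : Peg} (hp : validPeg p) (hq : validPeg q)
    (h : encPeg p = encPeg q) : p = q := by
  rcases hp with rfl | rfl | rfl <;> rcases hq with rfl | rfl | rfl <;>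
    simp [encPeg] at h ⊢

/- ## Loop erasure: shortening a solution to length at most `3 ^ n - 1` -/

lemma erase_loops (w : Peg → Peg → ℝ) (hw : ∀ i j, 0 ≤ w i j) {n : ℕ} :
    ∀ (L : ℕ) (ms : List (Peg × Peg)) (c c' : Conf n), ms.length ≤ L →
      Solves c ms c' → (∀ d, validPeg (c d)) →
      ∃ ms', Solves c ms' c' ∧ cost w ms' ≤ cost w ms ∧ ms'.length ≤ 3 ^ n - 1 := by
  intro L
  induction L with
  | zero =>
    intro ms c c' hlen h _
    have h3 : 0 < 3 ^ n := pow_pos (by norm_num) n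
    exact ⟨ms, h, le_refl _, by omega⟩
  | succ L ihL =>
    intro ms c c' hlen h hv
    by_cases hshort : ms.length ≤ 3 ^ n - 1
    · exact ⟨ms, h, le_refl _, hshort⟩
    · have h3 : 0 < 3 ^ n := pow_pos (by norm_num) n
      have hlong : 3 ^ n ≤ ms.length := by omega
      have hsplit : ∀ k : ℕ, ∃ cm, Solves c (ms.take k) cm ∧ Solves cm (ms.drop k) c' :=
        fun k => solves_split (by rw [List.take_append_drop]; exact h)
      choose g hg1 hg2 using hsplit
      have hginv : ∀ (k : ℕ) (d : Fin n), validPeg (g k d) :=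
        fun k d => solves_valid (hg1 k) hv d
      have hcard : Fintype.card (Fin n → Fin 3) < Fintype.card (Fin (3 ^ n + 1)) := by
        simp [Fintype.card_fun]
      obtain ⟨a, b, hab, hGab⟩ := Fintype.exists_ne_map_eq_of_card_lt
        (fun k : Fin (3 ^ n + 1) => fun d : Fin n => encPeg (g (k : ℕ) d)) hcard
      have hgab : g (a : ℕ) = g (b : ℕ) :=
        funext fun d => encPeg_inj (hginv _ d) (hginv _ d) (congrFun hGab d)
      -- order a and b
      have key : ∀ a b : Fin (3 ^ n + 1), (a : ℕ) < (b : ℕ) → g (a : ℕ) = g (b : ℕ) →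
          ∃ ms', Solves c ms' c' ∧ cost w ms' ≤ cost w ms ∧ ms'.length ≤ 3 ^ n - 1 := by
        intro a b hab hgab
        set ms₂ := ms.take (a : ℕ) ++ ms.drop (b : ℕ) with hms₂
        have hs₂ : Solves c ms₂ c' := solves_append_s5 (hg1 (a : ℕ)) (hgab ▸ hg2 (b : ℕ))
        have hbl : (b : ℕ) ≤ ms.length := le_trans (Nat.lt_succ_iff.mp b.isLt) hlong
        have hlen₂ : ms₂.length ≤ L := by
          simp only [hms₂, List.length_append, List.length_take, List.length_drop]
          omega
        have hcost₂ : cost w ms₂ ≤ cost w ms := by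
          have e0 : (ms.take (b : ℕ)).take (a : ℕ) = ms.take (a : ℕ) := by
            rw [List.take_take]
            congr 1
            omega
          have e1 : cost w (ms.take (b : ℕ)) =
              cost w (ms.take (a : ℕ)) + cost w ((ms.take (b : ℕ)).drop (a : ℕ)) := by
            conv_lhs => rw [← List.take_append_drop (a : ℕ) (ms.take (b : ℕ))]
            rw [cost_append, e0]
          have e2 : cost w ms = cost w (ms.take (b : ℕ)) + cost w (ms.drop (b : ℕ)) := by
            conv_lhs => rw [← List.take_append_drop (b : ℕ) ms]
            rw [cost_append]
          rw [hms₂, cost_append, e2, e1]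
          have hnn := cost_nonneg w hw ((ms.take (b : ℕ)).drop (a : ℕ))
          linarith
        obtain ⟨ms', h1, h2, h3⟩ := ihL ms₂ c c' hlen₂ hs₂ hv
        exact ⟨ms', h1, le_trans h2 hcost₂, h3⟩
      rcases Ne.lt_or_gt hab with hlt | hlt
      · exact key a b hlt hgab
      · exact key b a hlt hgab.symm

/- ## Main theorem -/


/-- there exists a minimum-cost solution whose length `u` satisfies
`2 ^ n - 1 ≤ u ≤ 3 ^ n - 1`. -/
theorem stmt5 (w : Peg → Peg → ℝ) (hw : ∀ i j : Peg, 0 ≤ w i j)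
    (n : ℕ) (i j : Peg) (hi : validPeg i) (hj : validPeg j) (hij : i ≠ j) :
    ∃ ms : List (Peg × Peg), IsSolution n i j ms ∧ cost w ms = C w n i j ∧
      2 ^ n - 1 ≤ ms.length ∧ ms.length ≤ 3 ^ n - 1 := by
  classical
  obtain ⟨k, hvk, hki, hkj, -⟩ := third i j hi hj hij
  have hhan : IsSolution n i j (hanoi n i j k) :=
    hanoi_solves n i j k hi hj hvk hij (fun h => hki h.symm) (fun h => hkj h.symm)
  set V : Set (Peg × Peg) := {m | validPeg m.1 ∧ validPeg m.2} with hV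
  have hVfin : V.Finite := by
    have hsub : V ⊆ ({1, 2, 3} : Set Peg) ×ˢ ({1, 2, 3} : Set Peg) := by
      rintro ⟨p, q⟩ ⟨h1, h2⟩
      refine ⟨?_, ?_⟩ <;> simp only [Set.mem_insert_iff, Set.mem_singleton_iff]
      · exact h1
      · exact h2
    exact Set.Finite.subset (Set.Finite.prod (Set.toFinite _) (Set.toFinite _)) hsub
  set T : Set (List (Peg × Peg)) :=
    {ms | IsSolution n i j ms ∧ ms.length ≤ 3 ^ n - 1 ∧ ∀ x ∈ ms, x ∈ V} with hT
  have hTfin : T.Finite := by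
    apply Set.Finite.subset (finite_lists V hVfin (3 ^ n - 1))
    rintro l ⟨-, h2, h3⟩
    exact ⟨h2, h3⟩
  have key : ∀ ms, IsSolution n i j ms → ∃ ms', ms' ∈ T ∧ cost w ms' ≤ cost w ms := by
    intro ms hms
    obtain ⟨ms', h1, h2, h3⟩ :=
      erase_loops w hw ms.length ms _ _ (le_refl _) hms (fun _ => hi)
    exact ⟨ms', ⟨h1, h3, fun x hx => solves_moves_valid h1 x hx⟩, h2⟩
  have hTne : T.Nonempty := by
    obtain ⟨ms', hms', -⟩ := key _ hhan
    exact ⟨ms', hms'⟩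
  obtain ⟨ms₀, hms₀T, hmin⟩ := Set.exists_min_image T (cost w) hTfin hTne
  have hlb : ∀ x ∈ {x : ℝ | ∃ ms, IsSolution n i j ms ∧ cost w ms = x}, cost w ms₀ ≤ x := by
    rintro x ⟨ms, hms, rfl⟩
    obtain ⟨ms', hT', hc⟩ := key ms hms
    exact le_trans (hmin ms' hT') hc
  have hmem : cost w ms₀ ∈ {x : ℝ | ∃ ms, IsSolution n i j ms ∧ cost w ms = x} :=
    ⟨ms₀, hms₀T.1, rfl⟩
  have hC : cost w ms₀ = C w n i j :=
    le_antisymm (le_csInf ⟨_, hmem⟩ hlb) (csInf_le ⟨_, hlb⟩ hmem)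
  exact ⟨ms₀, hms₀T.1, hC, lower_bound n i j hi hj hij ms₀ hms₀T.1, hms₀T.2.1⟩
end
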